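/- arXiv:2105.11360 — 2 statements merged into one kernel-verified Lean document; each statement's English description precedes it below -/
import Mathlib

section
/- For every m, n ∈ ℕ, the Weyl algebra A_{m,n} is isomorphic as a k-algebra to A_{min(m,n)} ⊗ k[t_1, …, t_{|m-n|}], where A_r = A_{r,r} is the classical Weyl algebra. -/
open scoped TensorProduct

/-- Defining relations of the Weyl algebra `A_{m,n}`. -/
inductive WeylRel (k : Type*) [Field k] (m n : ℕ) :
    FreeAlgebra k (Fin m ⊕ Fin n) → FreeAlgebra k (Fin m ⊕ Fin n) → Prop
  | xx (i i' : Fin m) :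
      WeylRel k m n (FreeAlgebra.ι k (Sum.inl i) * FreeAlgebra.ι k (Sum.inl i'))
        (FreeAlgebra.ι k (Sum.inl i') * FreeAlgebra.ι k (Sum.inl i))
  | yy (j j' : Fin n) :
      WeylRel k m n (FreeAlgebra.ι k (Sum.inr j) * FreeAlgebra.ι k (Sum.inr j'))
        (FreeAlgebra.ι k (Sum.inr j') * FreeAlgebra.ι k (Sum.inr j))
  | xy (i : Fin m) (j : Fin n) :
      WeylRel k m n (FreeAlgebra.ι k (Sum.inl i) * FreeAlgebra.ι k (Sum.inr j)
          - FreeAlgebra.ι k (Sum.inr j) * FreeAlgebra.ι k (Sum.inl i))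
        (if (i : ℕ) = (j : ℕ) then 1 else 0)

/-- The Weyl algebra `A_{m,n}`. -/
def WeylAlgebra (k : Type*) [Field k] (m n : ℕ) := RingQuot (WeylRel k m n)

noncomputable instance (k : Type*) [Field k] (m n : ℕ) : Ring (WeylAlgebra k m n) :=
  inferInstanceAs (Ring (RingQuot (WeylRel k m n)))

noncomputable instance (k : Type*) [Field k] (m n : ℕ) : Algebra k (WeylAlgebra k m n) :=
  inferInstanceAs (Algebra k (RingQuot (WeylRel k m n)))

namespace WeylAux

variable (k : Type*) [Field k]

/-- The canonical map to the quotient. -/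
noncomputable def mkW (m n : ℕ) : FreeAlgebra k (Fin m ⊕ Fin n) →ₐ[k] WeylAlgebra k m n :=
  RingQuot.mkAlgHom k (WeylRel k m n)

lemma mkW_rel {m n : ℕ} {a b : FreeAlgebra k (Fin m ⊕ Fin n)} (h : WeylRel k m n a b) :
    mkW k m n a = mkW k m n b :=
  RingQuot.mkAlgHom_rel k h

lemma comm_xx {m n : ℕ} (i i' : Fin m) :
    mkW k m n (FreeAlgebra.ι k (Sum.inl i)) * mkW k m n (FreeAlgebra.ι k (Sum.inl i'))
      = mkW k m n (FreeAlgebra.ι k (Sum.inl i')) * mkW k m n (FreeAlgebra.ι k (Sum.inl i)) := by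
  simpa [map_mul] using mkW_rel k (WeylRel.xx (k := k) (m := m) (n := n) i i')

lemma comm_yy {m n : ℕ} (j j' : Fin n) :
    mkW k m n (FreeAlgebra.ι k (Sum.inr j)) * mkW k m n (FreeAlgebra.ι k (Sum.inr j'))
      = mkW k m n (FreeAlgebra.ι k (Sum.inr j')) * mkW k m n (FreeAlgebra.ι k (Sum.inr j)) := by
  simpa [map_mul] using mkW_rel k (WeylRel.yy (k := k) (m := m) (n := n) j j')

lemma comm_xy {m n : ℕ} (i : Fin m) (j : Fin n) :
    mkW k m n (FreeAlgebra.ι k (Sum.inl i)) * mkW k m n (FreeAlgebra.ι k (Sum.inr j))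
      - mkW k m n (FreeAlgebra.ι k (Sum.inr j)) * mkW k m n (FreeAlgebra.ι k (Sum.inl i))
      = if (i : ℕ) = (j : ℕ) then 1 else 0 := by
  have := mkW_rel k (WeylRel.xy (k := k) (m := m) (n := n) i j)
  rw [map_sub, map_mul, map_mul] at this
  rw [this, apply_ite (mkW k m n), map_one, map_zero]

lemma comm_xy' {m n : ℕ} (i : Fin m) (j : Fin n) (h : (i : ℕ) ≠ (j : ℕ)) :
    mkW k m n (FreeAlgebra.ι k (Sum.inl i)) * mkW k m n (FreeAlgebra.ι k (Sum.inr j))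
      = mkW k m n (FreeAlgebra.ι k (Sum.inr j)) * mkW k m n (FreeAlgebra.ι k (Sum.inl i)) := by
  have := comm_xy k i j
  rw [if_neg h, sub_eq_zero] at this
  exact this

/-- The `x`-generators beyond index `n` are central. -/
lemma extra_central {m n : ℕ} (i : Fin m) (hi : n ≤ (i : ℕ)) :
    mkW k m n (FreeAlgebra.ι k (Sum.inl i)) ∈ Subalgebra.center k (WeylAlgebra k m n) := by
  rw [Subalgebra.mem_center_iff]
  intro b
  obtain ⟨u, rfl⟩ := RingQuot.mkAlgHom_surjective k (WeylRel k m n) b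
  show mkW k m n u * _ = _ * mkW k m n u
  induction u using FreeAlgebra.induction with
  | grade0 r => simp [AlgHom.commutes, Algebra.commutes]
  | grade1 v =>
    match v with
    | Sum.inl i' => exact comm_xx k i' i
    | Sum.inr j => exact (comm_xy' k i j (by omega)).symm
  | mul a b ha hb => rw [map_mul, mul_assoc, hb, ← mul_assoc, ha, mul_assoc]
  | add a b ha hb => rw [map_add, add_mul, ha, hb, mul_add]

section Main

variable (m n : ℕ)

/-- The extra `x`-variables. -/
def extraVar (l : Fin (m - n)) : Fin m := ⟨n + (l : ℕ), by omega⟩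

/-- The backward map on the polynomial part, valued in the center. -/
noncomputable def bwd2 : MvPolynomial (Fin (m - n)) k →ₐ[k]
    Subalgebra.center k (WeylAlgebra k m n) :=
  MvPolynomial.aeval (fun l => ⟨mkW k m n (FreeAlgebra.ι k (Sum.inl (extraVar m n l))),
    extra_central k _ (Nat.le_add_right n l)⟩)

lemma bwd2_X (l : Fin (m - n)) :
    (bwd2 k m n (MvPolynomial.X l) : WeylAlgebra k m n)
      = mkW k m n (FreeAlgebra.ι k (Sum.inl (extraVar m n l))) := by
  simp [bwd2]

variable (h : n ≤ m)

local notation "T" => WeylAlgebra k n n ⊗[k] MvPolynomial (Fin (m - n)) k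

/-- Generators of the forward map `A_{m,n} → A_{n,n} ⊗ k[t]`. -/
noncomputable def fwdGen : Fin m ⊕ Fin n → WeylAlgebra k n n ⊗[k] MvPolynomial (Fin (m - n)) k
  | Sum.inl i =>
      if hi : (i : ℕ) < n then
        mkW k n n (FreeAlgebra.ι k (Sum.inl ⟨i, hi⟩)) ⊗ₜ 1
      else 1 ⊗ₜ MvPolynomial.X ⟨(i : ℕ) - n, by omega⟩
  | Sum.inr j => mkW k n n (FreeAlgebra.ι k (Sum.inr j)) ⊗ₜ 1

/-- The forward algebra map on the free algebra. -/
noncomputable def fwd0 : FreeAlgebra k (Fin m ⊕ Fin n) →ₐ[k] T :=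
  FreeAlgebra.lift k (fwdGen k m n h)

lemma fwd0_rel : ∀ ⦃a b⦄, WeylRel k m n a b → fwd0 k m n h a = fwd0 k m n h b := by
  intro a b r
  induction r with
  | xx i i' =>
    simp only [map_mul, fwd0, FreeAlgebra.lift_ι_apply, fwdGen]
    by_cases hi : (i : ℕ) < n <;> by_cases hi' : (i' : ℕ) < n <;>
      simp only [hi, hi', dif_pos, dif_neg, not_false_iff, Algebra.TensorProduct.tmul_mul_tmul,
        one_mul, mul_one]
    · rw [comm_xx]
    · rw [mul_comm (MvPolynomial.X _)]
  | yy j j' =>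
    simp only [map_mul, fwd0, FreeAlgebra.lift_ι_apply, fwdGen,
      Algebra.TensorProduct.tmul_mul_tmul, one_mul, mul_one]
    rw [comm_yy]
  | xy i j =>
    simp only [map_sub, map_mul, fwd0, FreeAlgebra.lift_ι_apply, fwdGen]
    by_cases hi : (i : ℕ) < n
    · simp only [hi, dif_pos, Algebra.TensorProduct.tmul_mul_tmul, one_mul, mul_one]
      rw [← TensorProduct.sub_tmul, comm_xy, apply_ite ((FreeAlgebra.lift k) (fwdGen k m n h)),
        map_one, map_zero, Fin.val_mk]
      split_ifs
      · exact Algebra.TensorProduct.one_def.symm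
      · rw [TensorProduct.zero_tmul]
    · simp only [hi, dif_neg, not_false_iff, Algebra.TensorProduct.tmul_mul_tmul, one_mul,
        mul_one, sub_self]
      rw [if_neg (by omega), map_zero]

/-- The forward map `A_{m,n} → A_{n,n} ⊗ k[t]`. -/
noncomputable def fwd : WeylAlgebra k m n →ₐ[k] T :=
  RingQuot.liftAlgHom k ⟨fwd0 k m n h, fwd0_rel k m n h⟩

lemma fwd_mkW (v : Fin m ⊕ Fin n) :
    fwd k m n h (mkW k m n (FreeAlgebra.ι k v)) = fwdGen k m n h v :=
  (RingQuot.liftAlgHom_mkAlgHom_apply k (fwd0 k m n h) (fwd0_rel k m n h) _).trans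
    (FreeAlgebra.lift_ι_apply _ _)

/-- The backward map on `A_{n,n}`, before quotient. -/
noncomputable def bwd1_0 : FreeAlgebra k (Fin n ⊕ Fin n) →ₐ[k] WeylAlgebra k m n :=
  FreeAlgebra.lift k (Sum.elim
    (fun i => mkW k m n (FreeAlgebra.ι k (Sum.inl (Fin.castLE h i))))
    (fun j => mkW k m n (FreeAlgebra.ι k (Sum.inr j))))

lemma bwd1_rel : ∀ ⦃a b⦄, WeylRel k n n a b → bwd1_0 k m n h a = bwd1_0 k m n h b := by
  intro a b r
  induction r with
  | xx i i' =>
    simp only [map_mul, bwd1_0, FreeAlgebra.lift_ι_apply, Sum.elim_inl]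
    exact comm_xx ..
  | yy j j' =>
    simp only [map_mul, bwd1_0, FreeAlgebra.lift_ι_apply, Sum.elim_inr]
    exact comm_yy ..
  | xy i j =>
    rw [apply_ite (bwd1_0 k m n h), map_one, map_zero]
    simp only [map_sub, map_mul, bwd1_0, FreeAlgebra.lift_ι_apply, Sum.elim_inl, Sum.elim_inr]
    rw [comm_xy, Fin.coe_castLE]

/-- The backward map on `A_{n,n}`. -/
noncomputable def bwd1 : WeylAlgebra k n n →ₐ[k] WeylAlgebra k m n :=
  RingQuot.liftAlgHom k ⟨bwd1_0 k m n h, bwd1_rel k m n h⟩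

lemma bwd1_mk (v : Fin n ⊕ Fin n) :
    bwd1 k m n h (mkW k n n (FreeAlgebra.ι k v)) = Sum.elim
      (fun i => mkW k m n (FreeAlgebra.ι k (Sum.inl (Fin.castLE h i))))
      (fun j => mkW k m n (FreeAlgebra.ι k (Sum.inr j))) v :=
  (RingQuot.liftAlgHom_mkAlgHom_apply k (bwd1_0 k m n h) (bwd1_rel k m n h) _).trans
    (FreeAlgebra.lift_ι_apply _ _)

/-- The backward map. -/
noncomputable def bwd : T →ₐ[k] WeylAlgebra k m n :=
  Algebra.TensorProduct.lift (bwd1 k m n h)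
    ((Subalgebra.center k (WeylAlgebra k m n)).val.comp (bwd2 k m n))
    (fun a b => Subalgebra.mem_center_iff.mp (bwd2 k m n b).2 (bwd1 k m n h a))

lemma bwd_tmul (a : WeylAlgebra k n n) (b : MvPolynomial (Fin (m - n)) k) :
    bwd k m n h (a ⊗ₜ b) = bwd1 k m n h a * (bwd2 k m n b : WeylAlgebra k m n) :=
  Algebra.TensorProduct.lift_tmul ..

lemma bwd_fwd : (bwd k m n h).comp (fwd k m n h) = AlgHom.id k (WeylAlgebra k m n) := by
  apply RingQuot.ringQuot_ext'
  apply FreeAlgebra.hom_ext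
  funext v
  show bwd k m n h (fwd k m n h (mkW k m n (FreeAlgebra.ι k v)))
      = mkW k m n (FreeAlgebra.ι k v)
  rw [fwd_mkW]
  cases v with
  | inl i =>
    by_cases hi : (i : ℕ) < n
    · rw [show fwdGen k m n h (Sum.inl i)
          = mkW k n n (FreeAlgebra.ι k (Sum.inl ⟨i, hi⟩)) ⊗ₜ 1 from by simp [fwdGen, hi]]
      rw [bwd_tmul, map_one, OneMemClass.coe_one, mul_one, bwd1_mk, Sum.elim_inl]
      rfl
    · rw [show fwdGen k m n h (Sum.inl i)
          = 1 ⊗ₜ MvPolynomial.X ⟨(i : ℕ) - n, by omega⟩ from by simp [fwdGen, hi]]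
      rw [bwd_tmul, map_one, one_mul, bwd2_X]
      have : extraVar m n ⟨(i : ℕ) - n, by omega⟩ = i := by
        apply Fin.ext
        show n + ((i : ℕ) - n) = (i : ℕ)
        omega
      rw [this]
  | inr j =>
    rw [show fwdGen k m n h (Sum.inr j)
        = mkW k n n (FreeAlgebra.ι k (Sum.inr j)) ⊗ₜ 1 from rfl]
    rw [bwd_tmul, map_one, OneMemClass.coe_one, mul_one, bwd1_mk, Sum.elim_inr]

lemma fwd_bwd : (fwd k m n h).comp (bwd k m n h) = AlgHom.id k T := by
  apply Algebra.TensorProduct.ext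
  · apply RingQuot.ringQuot_ext'
    apply FreeAlgebra.hom_ext
    funext v
    show fwd k m n h (bwd k m n h ((mkW k n n (FreeAlgebra.ι k v)) ⊗ₜ 1))
        = (mkW k n n (FreeAlgebra.ι k v)) ⊗ₜ 1
    rw [bwd_tmul, map_one, OneMemClass.coe_one, mul_one, bwd1_mk]
    cases v with
    | inl i =>
      rw [Sum.elim_inl, fwd_mkW]
      show (if hi : ((Fin.castLE h i : Fin m) : ℕ) < n then
          mkW k n n (FreeAlgebra.ι k (Sum.inl ⟨((Fin.castLE h i : Fin m) : ℕ), hi⟩)) ⊗ₜ 1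
        else _) = _
      rw [dif_pos (by simp)]
      rfl
    | inr j =>
      rw [Sum.elim_inr, fwd_mkW]
      rfl
  · apply MvPolynomial.algHom_ext
    intro l
    show fwd k m n h (bwd k m n h (1 ⊗ₜ MvPolynomial.X l)) = 1 ⊗ₜ MvPolynomial.X l
    rw [bwd_tmul, map_one, one_mul, bwd2_X, fwd_mkW,
      show fwdGen k m n h (Sum.inl (extraVar m n l))
          = 1 ⊗ₜ MvPolynomial.X ⟨((extraVar m n l : Fin m) : ℕ) - n,
              by show n + (l : ℕ) - n < m - n; omega⟩ from by
        simp only [fwdGen]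
        rw [dif_neg (by show ¬ (n + (l : ℕ) < n); omega)]]
    have : (⟨((extraVar m n l : Fin m) : ℕ) - n,
        by show n + (l : ℕ) - n < m - n; omega⟩ : Fin (m - n)) = l := by
      apply Fin.ext
      show (n + (l : ℕ)) - n = (l : ℕ)
      omega
    rw [this]

/-- `A_{m,n} ≅ A_{n,n} ⊗ k[t]` when `n ≤ m`. -/
noncomputable def isoOfLe : WeylAlgebra k m n ≃ₐ[k] T :=
  AlgEquiv.ofAlgHom (fwd k m n h) (bwd k m n h) (fwd_bwd k m n h) (bwd_fwd k m n h)

end Main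

section Swap

variable (m n : ℕ)

/-- The swap map on the free algebra: `x_i ↦ y_i`, `y_j ↦ -x_j`. -/
noncomputable def swap0 : FreeAlgebra k (Fin m ⊕ Fin n) →ₐ[k] WeylAlgebra k n m :=
  FreeAlgebra.lift k (Sum.elim
    (fun i => mkW k n m (FreeAlgebra.ι k (Sum.inr i)))
    (fun j => - mkW k n m (FreeAlgebra.ι k (Sum.inl j))))

lemma swap0_rel : ∀ ⦃a b⦄, WeylRel k m n a b → swap0 k m n a = swap0 k m n b := by
  intro a b r
  induction r with
  | xx i i' =>
    simp only [map_mul, swap0, FreeAlgebra.lift_ι_apply, Sum.elim_inl]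
    exact comm_yy ..
  | yy j j' =>
    simp only [map_mul, swap0, FreeAlgebra.lift_ι_apply, Sum.elim_inr]
    rw [neg_mul_neg, neg_mul_neg]
    exact comm_xx ..
  | xy i j =>
    rw [apply_ite (swap0 k m n), map_one, map_zero]
    simp only [map_sub, map_mul, swap0, FreeAlgebra.lift_ι_apply, Sum.elim_inl, Sum.elim_inr]
    rw [mul_neg, neg_mul, sub_neg_eq_add, neg_add_eq_sub, comm_xy]
    split_ifs <;> first | rfl | omega

/-- The swap map `A_{m,n} → A_{n,m}`. -/
noncomputable def swapHom : WeylAlgebra k m n →ₐ[k] WeylAlgebra k n m :=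
  RingQuot.liftAlgHom k ⟨swap0 k m n, swap0_rel k m n⟩

lemma swapHom_mk (v : Fin m ⊕ Fin n) :
    swapHom k m n (mkW k m n (FreeAlgebra.ι k v)) = Sum.elim
      (fun i => mkW k n m (FreeAlgebra.ι k (Sum.inr i)))
      (fun j => - mkW k n m (FreeAlgebra.ι k (Sum.inl j))) v :=
  (RingQuot.liftAlgHom_mkAlgHom_apply k (swap0 k m n) (swap0_rel k m n) _).trans
    (FreeAlgebra.lift_ι_apply _ _)

/-- The unswap map on the free algebra: `x_i ↦ -y_i`, `y_j ↦ x_j`. -/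
noncomputable def unswap0 : FreeAlgebra k (Fin m ⊕ Fin n) →ₐ[k] WeylAlgebra k n m :=
  FreeAlgebra.lift k (Sum.elim
    (fun i => - mkW k n m (FreeAlgebra.ι k (Sum.inr i)))
    (fun j => mkW k n m (FreeAlgebra.ι k (Sum.inl j))))

lemma unswap0_rel : ∀ ⦃a b⦄, WeylRel k m n a b → unswap0 k m n a = unswap0 k m n b := by
  intro a b r
  induction r with
  | xx i i' =>
    simp only [map_mul, unswap0, FreeAlgebra.lift_ι_apply, Sum.elim_inl]
    rw [neg_mul_neg, neg_mul_neg]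
    exact comm_yy ..
  | yy j j' =>
    simp only [map_mul, unswap0, FreeAlgebra.lift_ι_apply, Sum.elim_inr]
    exact comm_xx ..
  | xy i j =>
    rw [apply_ite (unswap0 k m n), map_one, map_zero]
    simp only [map_sub, map_mul, unswap0, FreeAlgebra.lift_ι_apply, Sum.elim_inl, Sum.elim_inr]
    rw [neg_mul, mul_neg, sub_neg_eq_add, neg_add_eq_sub, comm_xy]
    split_ifs <;> first | rfl | omega

/-- The unswap map `A_{m,n} → A_{n,m}`. -/
noncomputable def unswapHom : WeylAlgebra k m n →ₐ[k] WeylAlgebra k n m :=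
  RingQuot.liftAlgHom k ⟨unswap0 k m n, unswap0_rel k m n⟩

lemma unswapHom_mk (v : Fin m ⊕ Fin n) :
    unswapHom k m n (mkW k m n (FreeAlgebra.ι k v)) = Sum.elim
      (fun i => - mkW k n m (FreeAlgebra.ι k (Sum.inr i)))
      (fun j => mkW k n m (FreeAlgebra.ι k (Sum.inl j))) v :=
  (RingQuot.liftAlgHom_mkAlgHom_apply k (unswap0 k m n) (unswap0_rel k m n) _).trans
    (FreeAlgebra.lift_ι_apply _ _)

lemma swap_unswap :
    (swapHom k m n).comp (unswapHom k n m) = AlgHom.id k (WeylAlgebra k n m) := by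
  apply RingQuot.ringQuot_ext'
  apply FreeAlgebra.hom_ext
  funext v
  show swapHom k m n (unswapHom k n m (mkW k n m (FreeAlgebra.ι k v)))
      = mkW k n m (FreeAlgebra.ι k v)
  rw [unswapHom_mk]
  cases v with
  | inl a => rw [Sum.elim_inl, map_neg, swapHom_mk, Sum.elim_inr, neg_neg]
  | inr b => rw [Sum.elim_inr, swapHom_mk, Sum.elim_inl]

lemma unswap_swap :
    (unswapHom k n m).comp (swapHom k m n) = AlgHom.id k (WeylAlgebra k m n) := by
  apply RingQuot.ringQuot_ext'
  apply FreeAlgebra.hom_ext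
  funext v
  show unswapHom k n m (swapHom k m n (mkW k m n (FreeAlgebra.ι k v)))
      = mkW k m n (FreeAlgebra.ι k v)
  rw [swapHom_mk]
  cases v with
  | inl i => rw [Sum.elim_inl, unswapHom_mk, Sum.elim_inr]
  | inr j => rw [Sum.elim_inr, map_neg, unswapHom_mk, Sum.elim_inl, neg_neg]

/-- The swap isomorphism `A_{m,n} ≅ A_{n,m}`. -/
noncomputable def swapEquiv : WeylAlgebra k m n ≃ₐ[k] WeylAlgebra k n m :=
  AlgEquiv.ofAlgHom (swapHom k m n) (unswapHom k n m)
    (swap_unswap k m n) (unswap_swap k m n)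

end Swap

end WeylAux

/-- `A_{m,n} ≅ A_{min m n} ⊗ k[t_1,…,t_{|m-n|}]` as `k`-algebras. -/
theorem weylAlgebra_iso_tensor (k : Type*) [Field k] [CharZero k] (m n : ℕ) :
    Nonempty (WeylAlgebra k m n ≃ₐ[k]
      (WeylAlgebra k (min m n) (min m n) ⊗[k]
        MvPolynomial (Fin (max m n - min m n)) k)) := by
  rcases le_total n m with h | h
  · rw [min_eq_right h, max_eq_left h]
    exact ⟨WeylAux.isoOfLe k m n h⟩
  · rw [min_eq_left h, max_eq_right h]
    exact ⟨(WeylAux.swapEquiv k m n).trans (WeylAux.isoOfLe k n m h)⟩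
end

section
/- Let A be a commutative k-algebra with commuting automorphisms σ_1,…,σ_n, and b_1,…,b_n ∈ A such that D_i(b_j) = 0 for i ≠ j and D_i(D_i(b_i)) = 2 for each i (where D_i = σ_i − id). Then in the smash product A # T^n, the elements x_i = b_i t_i^{-1} and y_j = −t_j satisfy [x_i, x_j] = 0 for i ≠ j and [x_i, y_j] = D_j(b_i) t_i^{-1} t_j; in particular [x_i, y_j] = 0 for i ≠ j. -/
/-- In the smash product `A # T^n` (with `t i * ι a = ι (σ i a) * t i`, the `t i`
pairwise commuting), if `D i (b j) = 0` for `i ≠ j` and `D i (D i (b i)) = 2`, then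
`x i = b i * (t i)⁻¹` and `y j = -(t j)` satisfy `[x i, x j] = 0` for `i ≠ j` and
`[x i, y j] = D j (b i) * (t i)⁻¹ * t j`; in particular `[x i, y j] = 0` for `i ≠ j`. -/
theorem smash_weyl_relations {k A B : Type*} [Field k] [CharZero k]
    [CommRing A] [Algebra k A] [Ring B] [Algebra k B] {n : ℕ}
    (σ : Fin n → (A ≃ₐ[k] A)) (hcomm : ∀ i j (a : A), σ i (σ j a) = σ j (σ i a))
    (b : Fin n → A)
    (hb : ∀ i j, i ≠ j → σ i (b j) = b j)
    (hb2 : ∀ i, σ i (σ i (b i) - b i) - (σ i (b i) - b i) = algebraMap k A 2)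
    (ι : A →ₐ[k] B) (t : Fin n → Bˣ)
    (hrel : ∀ i (a : A), (t i : B) * ι a = ι (σ i a) * (t i : B))
    (htt : ∀ i j, (t i : B) * (t j : B) = (t j : B) * (t i : B)) :
    (∀ i j, i ≠ j →
      (ι (b i) * ((t i)⁻¹ : Bˣ)) * (ι (b j) * ((t j)⁻¹ : Bˣ)) =
      (ι (b j) * ((t j)⁻¹ : Bˣ)) * (ι (b i) * ((t i)⁻¹ : Bˣ))) ∧
    (∀ i j,
      (ι (b i) * ((t i)⁻¹ : Bˣ)) * (-(t j : B)) - (-(t j : B)) * (ι (b i) * ((t i)⁻¹ : Bˣ)) =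
      ι (σ j (b i) - b i) * (((t i)⁻¹ : Bˣ) : B) * (t j : B)) ∧
    (∀ i j, i ≠ j →
      (ι (b i) * ((t i)⁻¹ : Bˣ)) * (-(t j : B)) - (-(t j : B)) * (ι (b i) * ((t i)⁻¹ : Bˣ)) = 0) := by

  have hinv : ∀ i (a : A), ι a * (((t i)⁻¹ : Bˣ) : B) = (((t i)⁻¹ : Bˣ) : B) * ι (σ i a) := by
    intro i a
    rw [Units.mul_inv_eq_iff_eq_mul, mul_assoc, ← hrel i a, Units.inv_mul_cancel_left]
  have htinv : ∀ i j, ((t j : B)) * (((t i)⁻¹ : Bˣ) : B) = (((t i)⁻¹ : Bˣ) : B) * (t j : B) := by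
    intro i j
    rw [Units.mul_inv_eq_iff_eq_mul, mul_assoc, ← htt i j, Units.inv_mul_cancel_left]
  have hii : ∀ i j, (((t i)⁻¹ : Bˣ) : B) * (((t j)⁻¹ : Bˣ) : B)
      = (((t j)⁻¹ : Bˣ) : B) * (((t i)⁻¹ : Bˣ) : B) := by
    intro i j
    rw [Units.mul_inv_eq_iff_eq_mul, mul_assoc, ← htinv i j, Units.inv_mul_cancel_left]
  have key : ∀ i j,
      (ι (b i) * ((t i)⁻¹ : Bˣ)) * (-(t j : B)) - (-(t j : B)) * (ι (b i) * ((t i)⁻¹ : Bˣ)) =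
      ι (σ j (b i) - b i) * (((t i)⁻¹ : Bˣ) : B) * (t j : B) := by
    intro i j
    have h1 : (t j : B) * (ι (b i) * (((t i)⁻¹ : Bˣ) : B))
        = ι (σ j (b i)) * ((((t i)⁻¹ : Bˣ) : B) * (t j : B)) := by
      rw [← mul_assoc, hrel j (b i), mul_assoc, ← htinv i j, ← mul_assoc]
    rw [map_sub, sub_mul]
    rw [mul_neg, neg_mul, sub_neg_eq_add, neg_add_eq_sub]
    rw [h1]
    rw [sub_mul, mul_assoc, mul_assoc]
  refine ⟨?_, key, ?_⟩
  · intro i j hij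
    have h1 : ι (b j) * (((t i)⁻¹ : Bˣ) : B) = (((t i)⁻¹ : Bˣ) : B) * ι (b j) := by
      rw [hinv i (b j), hb i j hij]
    have h2 : ι (b i) * (((t j)⁻¹ : Bˣ) : B) = (((t j)⁻¹ : Bˣ) : B) * ι (b i) := by
      rw [hinv j (b i), hb j i hij.symm]
    calc (ι (b i) * ((t i)⁻¹ : Bˣ)) * (ι (b j) * ((t j)⁻¹ : Bˣ))
        = ι (b i) * ((((t i)⁻¹ : Bˣ) : B) * ι (b j)) * (((t j)⁻¹ : Bˣ) : B) := by
          simp [mul_assoc]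
      _ = ι (b i) * ι (b j) * ((((t i)⁻¹ : Bˣ) : B) * (((t j)⁻¹ : Bˣ) : B)) := by
          rw [← h1]; simp [mul_assoc]
      _ = ι (b j) * ι (b i) * ((((t j)⁻¹ : Bˣ) : B) * (((t i)⁻¹ : Bˣ) : B)) := by
          rw [← map_mul, mul_comm (b i) (b j), map_mul, hii]
      _ = ι (b j) * ((((t j)⁻¹ : Bˣ) : B) * ι (b i)) * (((t i)⁻¹ : Bˣ) : B) := by
          rw [← h2]; simp [mul_assoc]
      _ = (ι (b j) * ((t j)⁻¹ : Bˣ)) * (ι (b i) * ((t i)⁻¹ : Bˣ)) := by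
          simp [mul_assoc]
  · intro i j hij
    rw [key i j, hb j i hij.symm, sub_self, map_zero, zero_mul, zero_mul]
end
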